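/- Let (P, m, A) be a poset system such that there exists no pair (a, x) ∈ A × P with a ≺_P x ≺_P m. Then for every prime power q, k(P, m, A; q) = k(P − m; q), where P − m is the induced subposet of P on P \ {m}. -/

import Mathlib

/-
Common framework: pattern posets, pattern algebras and pattern groups
(in the sense of Isaacs), the spaces `L_P(q)` realizing the dual of the pattern
algebra, the co-adjoint action, poset systems `(P, m, A)` and their orbit counts
`k(P, m, A; q)`, and combinatorial operations on pattern posets, following
"On Higman's conjecture" by Pak and Soffer.
-/

open Matrix

/-- A pattern poset on `{0,…,n-1}`: a strict partial order on `Fin n` that has the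
standard order of the integers as a linear extension. -/
structure PatternPoset (n : ℕ) where
  lt : Fin n → Fin n → Prop
  lt_trans : ∀ {i j k : Fin n}, lt i j → lt j k → lt i k
  lt_le : ∀ {i j : Fin n}, lt i j → (i : ℕ) < (j : ℕ)

namespace PatternPoset

variable {n : ℕ}

theorem lt_irrefl (P : PatternPoset n) (i : Fin n) : ¬ P.lt i i :=
  fun h => Nat.lt_irrefl _ (P.lt_le h)

theorem ne_of_lt (P : PatternPoset n) {i j : Fin n} (h : P.lt i j) : i ≠ j := by
  intro e; subst e; exact P.lt_irrefl i h

/-- The pattern algebra `𝒰_P(q)`, as a subspace of the `n × n` matrices: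
matrices supported on the cells `(i,j)` with `i ≺ j`. -/
def patternAlg (P : PatternPoset n) (F : Type*) [Field F] :
    Submodule F (Matrix (Fin n) (Fin n) F) where
  carrier := {X | ∀ i j : Fin n, ¬ P.lt i j → X i j = 0}
  add_mem' := by
    intro a b ha hb i j h
    simp [Matrix.add_apply, ha i j h, hb i j h]
  zero_mem' := by intro i j h; simp
  smul_mem' := by
    intro c a ha i j h
    simp [Matrix.smul_apply, ha i j h]

theorem mul_mem_patternAlg {P : PatternPoset n} {F : Type*} [Field F]
    {X Y : Matrix (Fin n) (Fin n) F} (hX : X ∈ P.patternAlg F) (hY : Y ∈ P.patternAlg F) :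
    X * Y ∈ P.patternAlg F := by
  intro i j h
  rw [Matrix.mul_apply]
  apply Finset.sum_eq_zero
  intro k _
  by_cases h1 : P.lt i k
  · by_cases h2 : P.lt k j
    · exact absurd (P.lt_trans h1 h2) h
    · rw [hY k j h2, mul_zero]
  · rw [hX i k h1, zero_mul]

theorem pow_apply_ne_zero {P : PatternPoset n} {F : Type*} [Field F]
    {X : Matrix (Fin n) (Fin n) F} (hX : X ∈ P.patternAlg F) :
    ∀ t (i j : Fin n), (X ^ t) i j ≠ 0 → (i : ℕ) + t ≤ (j : ℕ) := by
  intro t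
  induction t with
  | zero =>
    intro i j h
    rw [pow_zero] at h
    by_cases hij : i = j
    · subst hij; simp
    · exact absurd (Matrix.one_apply_ne hij) h
  | succ t ih =>
    intro i j h
    rw [pow_succ, Matrix.mul_apply] at h
    obtain ⟨k, -, hk⟩ := Finset.exists_ne_zero_of_sum_ne_zero h
    have h1 : (X ^ t) i k ≠ 0 := fun e => hk (by rw [e, zero_mul])
    have h2 : X k j ≠ 0 := fun e => hk (by rw [e, mul_zero])
    have h3 : P.lt k j := by by_contra hc; exact h2 (hX k j hc)
    have h4 := ih i k h1
    have h5 := P.lt_le h3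
    omega

theorem pow_card_eq_zero {P : PatternPoset n} {F : Type*} [Field F]
    {X : Matrix (Fin n) (Fin n) F} (hX : X ∈ P.patternAlg F) : X ^ n = 0 := by
  ext i j
  simp only [Matrix.zero_apply]
  by_contra h
  have h1 := pow_apply_ne_zero hX n i j h
  have h2 := j.isLt
  omega

theorem pow_succ_mem_patternAlg {P : PatternPoset n} {F : Type*} [Field F]
    {X : Matrix (Fin n) (Fin n) F} (hX : X ∈ P.patternAlg F) (t : ℕ) :
    X ^ (t + 1) ∈ P.patternAlg F := by
  induction t with
  | zero => simpa using hX
  | succ t ih => rw [pow_succ]; exact mul_mem_patternAlg ih hX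

theorem inv_sub_one_mem {P : PatternPoset n} {F : Type*} [Field F]
    {a : (Matrix (Fin n) (Fin n) F)ˣ}
    (ha : ((a : Matrix (Fin n) (Fin n) F) - 1) ∈ P.patternAlg F) :
    (((a⁻¹ : (Matrix (Fin n) (Fin n) F)ˣ) : Matrix (Fin n) (Fin n) F) - 1)
      ∈ P.patternAlg F := by
  rcases Nat.eq_zero_or_pos n with hn | hn
  · subst hn; intro i j _; exact i.elim0
  obtain ⟨m, rfl⟩ : ∃ m, n = m + 1 := ⟨n - 1, by omega⟩
  set X : Matrix (Fin (m + 1)) (Fin (m + 1)) F :=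
    (a : Matrix (Fin (m + 1)) (Fin (m + 1)) F) - 1 with hXdef
  have hXmem : -X ∈ P.patternAlg F := (P.patternAlg F).neg_mem ha
  have hXn : (-X) ^ (m + 1) = 0 := pow_card_eq_zero hXmem
  have key : (∑ t ∈ Finset.range (m + 1), (-X) ^ t) *
      (a : Matrix (Fin (m + 1)) (Fin (m + 1)) F) = 1 := by
    have hgeom := geom_sum_mul (-X) (m + 1)
    rw [hXn] at hgeom
    have ha' : (a : Matrix (Fin (m + 1)) (Fin (m + 1)) F) = -((-X) - 1) := by
      rw [hXdef]; abel
    rw [ha', mul_neg, hgeom]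
    simp
  have hinv : ((a⁻¹ : (Matrix (Fin (m + 1)) (Fin (m + 1)) F)ˣ) :
        Matrix (Fin (m + 1)) (Fin (m + 1)) F)
      = ∑ t ∈ Finset.range (m + 1), (-X) ^ t :=
    Units.inv_eq_of_mul_eq_one_left key
  rw [hinv]
  have hsplit : (∑ t ∈ Finset.range (m + 1), (-X) ^ t) - 1
      = ∑ t ∈ Finset.range m, (-X) ^ (t + 1) := by
    rw [Finset.sum_range_succ' (fun t => (-X) ^ t) m]
    simp
  rw [hsplit]
  exact Submodule.sum_mem _ (fun t _ => pow_succ_mem_patternAlg hXmem t)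

theorem entry_cases {P : PatternPoset n} {F : Type*} [Field F]
    {M : Matrix (Fin n) (Fin n) F} (hM : (M - 1) ∈ P.patternAlg F)
    {i k : Fin n} (h : M i k ≠ 0) : i = k ∨ P.lt i k := by
  by_contra hc
  push_neg at hc
  apply h
  have h1 := hM i k hc.2
  have h2 : (1 : Matrix (Fin n) (Fin n) F) i k = 0 := Matrix.one_apply_ne hc.1
  calc M i k = (M - 1) i k + (1 : Matrix (Fin n) (Fin n) F) i k := by
        simp [Matrix.sub_apply]
    _ = 0 := by rw [h1, h2, add_zero]

theorem conj_entry_zero {P : PatternPoset n} {F : Type*} [Field F]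
    {A B Y : Matrix (Fin n) (Fin n) F}
    (hA : (A - 1) ∈ P.patternAlg F) (hB : (B - 1) ∈ P.patternAlg F)
    (i j : Fin n)
    (hzero : ∀ k l : Fin n, (i = k ∨ P.lt i k) → (l = j ∨ P.lt l j) → Y k l = 0) :
    (A * Y * B) i j = 0 := by
  rw [Matrix.mul_apply]
  apply Finset.sum_eq_zero
  intro l _
  rw [Matrix.mul_apply, Finset.sum_mul]
  apply Finset.sum_eq_zero
  intro k _
  by_cases hAik : A i k = 0
  · rw [hAik, zero_mul, zero_mul]
  by_cases hBlj : B l j = 0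
  · rw [hBlj, mul_zero]
  rw [hzero k l (entry_cases hA hAik) (entry_cases hB hBlj), mul_zero, zero_mul]

/-- The pattern group `U_P(q) = {1 + X : X ∈ 𝒰_P(q)}`, as a subgroup of the units of the
matrix ring. -/
def patternGroup (P : PatternPoset n) (F : Type*) [Field F] :
    Subgroup (Matrix (Fin n) (Fin n) F)ˣ where
  carrier := {g | ((g : Matrix (Fin n) (Fin n) F) - 1) ∈ P.patternAlg F}
  one_mem' := by
    simp only [Set.mem_setOf_eq, Units.val_one, sub_self]
    exact (P.patternAlg F).zero_mem
  mul_mem' := by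
    intro a b ha hb
    simp only [Set.mem_setOf_eq, Units.val_mul] at *
    have h : (a : Matrix (Fin n) (Fin n) F) * b - 1 =
        ((a : Matrix (Fin n) (Fin n) F) - 1) * ((b : Matrix (Fin n) (Fin n) F) - 1)
          + (((a : Matrix (Fin n) (Fin n) F) - 1) + ((b : Matrix (Fin n) (Fin n) F) - 1)) := by
      noncomm_ring
    rw [h]
    exact (P.patternAlg F).add_mem (mul_mem_patternAlg ha hb) ((P.patternAlg F).add_mem ha hb)
  inv_mem' := fun ha => inv_sub_one_mem ha

/-- `k(P; q)`: the number of conjugacy classes of the pattern group `U_P(q)`. -/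
noncomputable def kOf (P : PatternPoset n) (F : Type*) [Field F] : ℕ :=
  Nat.card (ConjClasses (P.patternGroup F))

/-- The chain poset `C_n`, whose pattern group is the full unitriangular group `U_n(q)`. -/
def chainPoset (n : ℕ) : PatternPoset n where
  lt i j := (i : ℕ) < (j : ℕ)
  lt_trans := fun h1 h2 => Nat.lt_trans h1 h2
  lt_le := fun h => h

/-- The induced subposet `P − m`, obtained by deleting the element `m`. -/
def delete (P : PatternPoset (n + 1)) (m : Fin (n + 1)) : PatternPoset n where
  lt i j := P.lt (m.succAbove i) (m.succAbove j)
  lt_trans := fun h1 h2 => P.lt_trans h1 h2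
  lt_le := fun {i j} h => by
    have h2 : m.succAbove i < m.succAbove j := by
      rw [Fin.lt_def]; exact P.lt_le h
    exact Fin.lt_def.mp (Fin.succAbove_lt_succAbove_iff.mp h2)

/-- The dual poset `P*`, relabeled by `i ↦ n + 1 − i` so that the standard order is
again a linear extension. -/
def dual (P : PatternPoset n) : PatternPoset n where
  lt i j := P.lt j.rev i.rev
  lt_trans := fun h1 h2 => P.lt_trans h2 h1
  lt_le := fun {i j} h => by
    have h1 : j.rev < i.rev := by rw [Fin.lt_def]; exact P.lt_le h
    exact Fin.lt_def.mp (Fin.rev_lt_rev.mp h1)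

/-- The disjoint union `P ⨿ Q` of two pattern posets. -/
def disjUnion {m n : ℕ} (P : PatternPoset m) (Q : PatternPoset n) :
    PatternPoset (m + n) where
  lt x y :=
    match finSumFinEquiv.symm x, finSumFinEquiv.symm y with
    | Sum.inl a, Sum.inl b => P.lt a b
    | Sum.inr a, Sum.inr b => Q.lt a b
    | _, _ => False
  lt_trans := by
    intro i j k hij hjk
    rcases hi : finSumFinEquiv.symm i with a | a <;>
      rcases hj : finSumFinEquiv.symm j with b | b <;>
        rcases hk : finSumFinEquiv.symm k with c | c <;>
          simp only [hi, hj, hk] at hij hjk ⊢ <;>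
            first
              | exact P.lt_trans hij hjk
              | exact Q.lt_trans hij hjk
  lt_le := by
    intro i j h
    rcases hi : finSumFinEquiv.symm i with a | a <;>
      rcases hj : finSumFinEquiv.symm j with b | b <;>
        simp only [hi, hj] at h
    · have hi' : i = Fin.castAdd _ a := by
        rw [← finSumFinEquiv_apply_left, ← hi, Equiv.apply_symm_apply]
      have hj' : j = Fin.castAdd _ b := by
        rw [← finSumFinEquiv_apply_left, ← hj, Equiv.apply_symm_apply]
      rw [hi', hj']
      exact P.lt_le h
    · have hi' : i = Fin.natAdd _ a := by
        rw [← finSumFinEquiv_apply_right, ← hi, Equiv.apply_symm_apply]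
      have hj' : j = Fin.natAdd _ b := by
        rw [← finSumFinEquiv_apply_right, ← hj, Equiv.apply_symm_apply]
      rw [hi', hj']
      simpa using Q.lt_le h

/-- The subspace of matrices quotiented away in `L_P(q)`:
those vanishing on all cells `(i,j)` with `j ≺ i`. -/
def lowQuot (P : PatternPoset n) (F : Type*) [Field F] :
    Submodule F (Matrix (Fin n) (Fin n) F) where
  carrier := {X | ∀ i j : Fin n, P.lt j i → X i j = 0}
  add_mem' := by
    intro a b ha hb i j h
    simp [Matrix.add_apply, ha i j h, hb i j h]
  zero_mem' := by intro i j h; simp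
  smul_mem' := by
    intro c a ha i j h
    simp [Matrix.smul_apply, ha i j h]

/-- The space `L_P(q)`, realizing the dual `𝒰_P(q)*` as a quotient of the
space of all `n × n` matrices. -/
abbrev LSpace (P : PatternPoset n) (F : Type*) [Field F] :=
  Matrix (Fin n) (Fin n) F ⧸ P.lowQuot F

end PatternPoset

/-- Conjugation `X ↦ g X g⁻¹` by a unit, as a linear map on matrices. -/
def conjLin {n : ℕ} (F : Type*) [Field F] (g : (Matrix (Fin n) (Fin n) F)ˣ) :
    Matrix (Fin n) (Fin n) F →ₗ[F] Matrix (Fin n) (Fin n) F where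
  toFun X := (g : Matrix (Fin n) (Fin n) F) * X *
    ((g⁻¹ : (Matrix (Fin n) (Fin n) F)ˣ) : Matrix (Fin n) (Fin n) F)
  map_add' X Y := by rw [mul_add, add_mul]
  map_smul' c X := by rw [mul_smul_comm, smul_mul_assoc]; rfl

namespace PatternPoset

variable {n : ℕ}

/-- The co-adjoint action `K_g(X) = g X g⁻¹` of the pattern group on `L_P(q)`. -/
noncomputable def coadj (P : PatternPoset n) (F : Type*) [Field F]
    (g : P.patternGroup F) : P.LSpace F →ₗ[F] P.LSpace F :=
  Submodule.mapQ _ _ (conjLin F (g : (Matrix (Fin n) (Fin n) F)ˣ)) (by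
    intro Y hY
    simp only [Submodule.mem_comap]
    have hg : ((g : (Matrix (Fin n) (Fin n) F)ˣ) : Matrix (Fin n) (Fin n) F) - 1
        ∈ P.patternAlg F := g.2
    have hginv : (((g : (Matrix (Fin n) (Fin n) F)ˣ)⁻¹ : (Matrix (Fin n) (Fin n) F)ˣ) :
        Matrix (Fin n) (Fin n) F) - 1 ∈ P.patternAlg F := inv_sub_one_mem g.2
    intro i j hji
    apply conj_entry_zero hg hginv
    intro k l hik hlj
    apply hY k l
    rcases hik with rfl | hik <;> rcases hlj with rfl | hlj
    · exact hji
    · exact P.lt_trans hlj hji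
    · exact P.lt_trans hji hik
    · exact P.lt_trans (P.lt_trans hlj hji) hik)

/-- The poset `P^(m)`: the poset on the same ground set whose only relations
are `x ≺ m` for `x ≺_P m`. -/
def restrictTo (P : PatternPoset n) (m : Fin n) : PatternPoset n where
  lt x y := y = m ∧ P.lt x y
  lt_trans := fun h1 h2 => ⟨h2.1, P.lt_trans h1.2 h2.2⟩
  lt_le := fun h => P.lt_le h.2

/-- The canonical projection `π : L_P(q) → L_{P^(m)}(q)`. -/
noncomputable def projL (P : PatternPoset n) (m : Fin n) (F : Type*) [Field F] :
    P.LSpace F →ₗ[F] (P.restrictTo m).LSpace F :=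
  Submodule.mapQ _ _ LinearMap.id (by
    intro X hX
    simp only [Submodule.mem_comap, LinearMap.id_coe, id_eq]
    intro i j h
    exact hX i j h.2)

end PatternPoset

/-- The elementary transvection `E_{i,j}(α) = 1 + α e_{i,j}` as a unit of the matrix ring. -/
def transvectionUnit {n : ℕ} {F : Type*} [Field F] (i j : Fin n) (hij : i ≠ j) (α : F) :
    (Matrix (Fin n) (Fin n) F)ˣ where
  val := 1 + Matrix.single i j α
  inv := 1 + Matrix.single i j (-α)
  val_inv := by
    have h0 : Matrix.single i j α * Matrix.single i j (-α) = 0 :=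
      by simp [hij.symm]
    have h1 : Matrix.single i j α + Matrix.single i j (-α) = 0 := by
      rw [← Matrix.single_add]; simp
    rw [add_mul, mul_add, mul_add, one_mul, mul_one, h0]
    rw [add_zero, add_assoc, one_mul, add_comm (Matrix.single i j (-α)), h1, add_zero]
  inv_val := by
    have h0 : Matrix.single i j (-α) * Matrix.single i j α = 0 :=
      by simp [hij.symm]
    have h1 : Matrix.single i j (-α) + Matrix.single i j α = 0 := by
      rw [← Matrix.single_add]; simp
    rw [add_mul, mul_add, mul_add, one_mul, mul_one, h0]
    rw [add_zero, add_assoc, one_mul, add_comm (Matrix.single i j α), h1, add_zero]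

/-- A poset system `(P, m, A)`: a pattern poset `P`, a maximal element `m`,
and an anti-chain `A ⊆ lb(m)`. -/
structure PosetSystem (n : ℕ) where
  P : PatternPoset n
  m : Fin n
  m_max : ∀ x, ¬ P.lt m x
  A : Finset (Fin n)
  A_lb : ∀ a ∈ A, P.lt a m
  A_anti : ∀ a ∈ A, ∀ b ∈ A, ¬ P.lt a b

namespace PosetSystem

variable {n : ℕ}

/-- The element `1_A = Σ_{a ∈ A} e_{m,a}` of `L_{P^(m)}(q)`. -/
noncomputable def oneA (S : PosetSystem n) (F : Type*) [Field F] :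
    (S.P.restrictTo S.m).LSpace F :=
  Submodule.Quotient.mk (∑ a ∈ S.A, Matrix.single S.m a (1 : F))

/-- The action of `U_P(q)` on `L_{P^(m)}(q)` induced by the co-adjoint action. -/
noncomputable def coadjQ (S : PosetSystem n) (F : Type*) [Field F]
    (g : S.P.patternGroup F) :
    (S.P.restrictTo S.m).LSpace F →ₗ[F] (S.P.restrictTo S.m).LSpace F :=
  Submodule.mapQ _ _ (conjLin F (g : (Matrix (Fin n) (Fin n) F)ˣ)) (by
    intro Y hY
    simp only [Submodule.mem_comap]
    have hg : ((g : (Matrix (Fin n) (Fin n) F)ˣ) : Matrix (Fin n) (Fin n) F) - 1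
        ∈ S.P.patternAlg F := g.2
    have hginv : (((g : (Matrix (Fin n) (Fin n) F)ˣ)⁻¹ : (Matrix (Fin n) (Fin n) F)ˣ) :
        Matrix (Fin n) (Fin n) F) - 1 ∈ S.P.patternAlg F :=
      PatternPoset.inv_sub_one_mem g.2
    intro i j hji
    obtain ⟨him, hjilt⟩ := hji
    apply PatternPoset.conj_entry_zero hg hginv
    intro k l hik hlj
    have hk : k = S.m := by
      rcases hik with rfl | hik
      · exact him
      · rw [him] at hik; exact absurd hik (S.m_max k)
    have hlm : S.P.lt l S.m := by
      rcases hlj with rfl | hlj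
      · rw [← him]; exact hjilt
      · rw [him] at hjilt; exact S.P.lt_trans hlj hjilt
    subst hk
    exact hY S.m l ⟨rfl, hlm⟩)

/-- The stabilizer of `1_A` in `U_P(q)` for the induced action on `L_{P^(m)}(q)`. -/
noncomputable def stab (S : PosetSystem n) (F : Type*) [Field F] :
    Set (S.P.patternGroup F) :=
  {g | S.coadjQ F g (S.oneA F) = S.oneA F}

/-- The fiber `π⁻¹(1_A) ⊆ L_P(q)`. -/
noncomputable def fiber (S : PosetSystem n) (F : Type*) [Field F] :
    Set (S.P.LSpace F) :=
  {X | S.P.projL S.m F X = S.oneA F}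

/-- `k(P, m, A; q)`: the number of orbits of `Stab_{U_P(q)}(1_A)` acting on the fiber
`π⁻¹(1_A)` under the co-adjoint action, counted as the number of distinct orbit sets. -/
noncomputable def systemK (S : PosetSystem n) (F : Type*) [Field F] : ℕ :=
  Nat.card {O : Set (S.P.LSpace F) // ∃ X ∈ S.fiber F,
    O = {Y | ∃ g ∈ S.stab F, S.P.coadj F g X = Y}}

/-- The poset `D(S)`: delete from `P` every relation `(a, x)` with `a ∈ A`,
`a ≺ x ≺ m`, and `A ∩ lb(x) = {a}`. -/
def D (S : PosetSystem n) : PatternPoset n where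
  lt x y := S.P.lt x y ∧
    ¬ (x ∈ S.A ∧ S.P.lt y S.m ∧ ∀ b ∈ S.A, S.P.lt b y → b = x)
  lt_trans := by
    rintro i j k ⟨hij, hi⟩ ⟨hjk, -⟩
    refine ⟨S.P.lt_trans hij hjk, ?_⟩
    rintro ⟨hiA, hkm, huniq⟩
    exact hi ⟨hiA, S.P.lt_trans hjk hkm, fun b hb hbj => huniq b hb (S.P.lt_trans hbj hjk)⟩
  lt_le := fun h => S.P.lt_le h.1

/-- `D(S)` together with the same `m` and `A`, as a poset system. -/
def DSys (S : PosetSystem n) : PosetSystem n where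
  P := S.D
  m := S.m
  m_max := fun x h => S.m_max x h.1
  A := S.A
  A_lb := fun a ha => ⟨S.A_lb a ha, fun h => S.P.lt_irrefl S.m h.2.1⟩
  A_anti := fun a ha b hb h => S.A_anti a ha b hb h.1

end PosetSystem

/-!
Kirillov's lemma turns `k(Q; q)` into the number of co-adjoint orbits on `L_Q(q)`: `g ↦ g - 1`
identifies the conjugacy classes of `U_Q(q)` with the adjoint orbits on `𝒰_Q(q)`, and the trace
pairing makes `L_Q(q)` the dual of `𝒰_Q(q)` with `K_g` adjoint to conjugation by `g⁻¹`, so every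
`g` has equally many fixed points on both spaces and Burnside's lemma gives equally many orbits.

If no `a ∈ A` lies below some `x ≺ m`, then for `X` in the fiber, row `m` of `g X g⁻¹` agrees with
that of `X` on `lb(m)`: the stabiliser of `1_A` is all of `U_P(q)` and the fiber is invariant.
Deleting row and column `m` maps the fiber bijectively onto `L_{P−m}(q)`, intertwining the action
of `U_P(q)` with that of `U_{P−m}(q)` through the surjective restriction `U_P(q) → U_{P−m}(q)`,
so the orbits correspond.
-/

namespace MulAction

variable {G α : Type*} [Group G] [MulAction G α]

theorem card_conjClasses_eq_card_orbits (e : G ≃ α) (he : ∀ c a, e (c * a * c⁻¹) = c • e a) :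
    Nat.card (ConjClasses G) = Nat.card (orbitRel.Quotient G α) := by
  refine Nat.card_congr (Quotient.congr e fun a b => ?_)
  change IsConj a b ↔ e a ∈ orbit G (e b)
  simp only [isConj_comm (g := a), isConj_iff, mem_orbit_iff, ← he, e.apply_eq_iff_eq]

theorem card_orbits_eq_of_card_fixedBy_eq {β : Type*} [MulAction G β] [Finite G] [Finite α]
    [Finite β]
    (h : ∀ g : G, Nat.card (fixedBy α g) = Nat.card (fixedBy β g)) :
    Nat.card (orbitRel.Quotient G α) = Nat.card (orbitRel.Quotient G β) := by
  classical
  have := Fintype.ofFinite G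
  have := Fintype.ofFinite α
  have := Fintype.ofFinite β
  have := Fintype.ofFinite (orbitRel.Quotient G α)
  have := Fintype.ofFinite (orbitRel.Quotient G β)
  have hsum := sum_card_fixedBy_eq_card_orbits_mul_card_group G α
  rw [Finset.sum_congr rfl fun g _ => by simpa only [Nat.card_eq_fintype_card] using h g,
    sum_card_fixedBy_eq_card_orbits_mul_card_group G β] at hsum
  simpa only [Nat.card_eq_fintype_card] using
    (Nat.eq_of_mul_eq_mul_right Fintype.card_pos hsum).symm

variable {H β : Type*} [Group H] [MulAction H β]

theorem card_orbitSets_eq_card_orbits (φ : G →* H) (hφ : Function.Surjective φ) {s : Set α}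
    (hs : ∀ g : G, ∀ x ∈ s, g • x ∈ s) {f : α → β} (hf : ∀ g : G, ∀ x ∈ s, f (g • x) = φ g • f x)
    (hbij : Set.BijOn f s Set.univ) :
    Nat.card {O : Set α // ∃ x ∈ s, O = orbit G x} = Nat.card (orbitRel.Quotient H β) := by
  have himage : ∀ x ∈ s, f '' orbit G x = orbit H (f x) := by
    intro x hx
    ext y
    simp only [Set.mem_image, mem_orbit_iff]
    constructor
    · rintro ⟨_, ⟨g, rfl⟩, rfl⟩
      exact ⟨φ g, (hf g x hx).symm⟩
    · rintro ⟨h, rfl⟩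
      obtain ⟨g, rfl⟩ := hφ h
      exact ⟨g • x, ⟨g, rfl⟩, hf g x hx⟩
  have hinj : Set.InjOn (Set.image f) {O | ∃ x ∈ s, O = orbit G x} := by
    rintro _ ⟨x, hx, rfl⟩ _ ⟨y, hy, rfl⟩ hxy
    obtain ⟨h, hh⟩ := mem_orbit_iff.mp <| show f y ∈ orbit H (f x) by
      rw [← himage x hx, hxy, himage y hy]
      exact mem_orbit_self _
    obtain ⟨g, rfl⟩ := hφ h
    rw [← hf g x hx] at hh
    rw [← hbij.injOn (hs g x hx) hy hh, orbit_smul]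
  have hrange : Set.image f '' {O | ∃ x ∈ s, O = orbit G x} =
      Set.range (orbitRel.Quotient.orbit (G := H) (α := β)) := by
    ext O
    constructor
    · rintro ⟨_, ⟨x, hx, rfl⟩, rfl⟩
      exact ⟨Quotient.mk _ (f x), (himage x hx).symm⟩
    · rintro ⟨⟨y⟩, rfl⟩
      obtain ⟨x, hx, rfl⟩ := hbij.surjOn (Set.mem_univ y)
      exact ⟨orbit G x, ⟨x, hx, rfl⟩, himage x hx⟩
  change Nat.card {O | ∃ x ∈ s, O = orbit G x} = _
  rw [Nat.card_coe_set_eq, ← hinj.ncard_image, hrange, ← Nat.card_coe_set_eq,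
    Nat.card_range_of_injective orbitRel.Quotient.orbit_injective]

end MulAction

namespace LinearMap

variable {K V W : Type*} [Field K] [AddCommGroup V] [Module K V] [AddCommGroup W] [Module K W]

theorem coe_ker_sub_one (T : V →ₗ[K] V) : (ker (T - 1) : Set V) = Function.fixedPoints T := by
  ext v
  simp [Function.IsFixedPt, sub_eq_zero]

theorem finrank_ker_dualMap [FiniteDimensional K W] (S : W →ₗ[K] W) :
    Module.finrank K (ker S.dualMap) = Module.finrank K (ker S) := by
  have := S.finrank_range_add_finrank_ker
  have := S.dualMap.finrank_range_add_finrank_ker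
  have := S.finrank_range_dualMap_eq_finrank_range
  have := Subspace.dual_finrank_eq (K := K) (V := W)
  omega

theorem card_fixedPoints_eq_of_isPerfPair [Finite K] [FiniteDimensional K W]
    (B : V →ₗ[K] W →ₗ[K] K) [B.IsPerfPair] {T : V →ₗ[K] V} {S : W →ₗ[K] W}
    (h : ∀ v w, B (T v) w = B v (S w)) :
    Nat.card (Function.fixedPoints T) = Nat.card (Function.fixedPoints S) := by
  have := Module.Finite.equiv B.toPerfPair.symm
  have hker : ker (T - 1) = (ker (S - 1).dualMap).comap B.toPerfPair.toLinearMap := by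
    have hcomm : (S - 1).dualMap ∘ₗ B.toPerfPair.toLinearMap =
        B.toPerfPair.toLinearMap ∘ₗ (T - 1) := by
      ext v w
      simp [h]
    rw [← ker_comp, hcomm, LinearEquiv.ker_comp]
  rw [← coe_ker_sub_one, ← coe_ker_sub_one, SetLike.coe_sort_coe, SetLike.coe_sort_coe,
    Module.natCard_eq_pow_finrank (K := K) (V := ker (T - 1)),
    Module.natCard_eq_pow_finrank (K := K) (V := ker (S - 1)),
    ← finrank_ker_dualMap (S - 1), hker, Submodule.comap_equiv_eq_map_symm,
    LinearEquiv.finrank_map_eq]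

end LinearMap

namespace Matrix

variable {n : ℕ} {α : Type*}

theorem submatrix_succAbove_mul [NonUnitalNonAssocSemiring α]
    (X Y : Matrix (Fin (n + 1)) (Fin (n + 1)) α) (m : Fin (n + 1)) :
    (X * Y).submatrix m.succAbove m.succAbove =
      X.submatrix m.succAbove m.succAbove * Y.submatrix m.succAbove m.succAbove +
        vecMulVec (fun i => X (m.succAbove i) m) (fun j => Y m (m.succAbove j)) := by
  ext i j
  simp [mul_apply, Fin.sum_univ_succAbove _ m, vecMulVec_apply, add_comm]

/-- The block-diagonal matrix with blocks `Z` and `1`, the latter at index `m`. -/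
def extendByOne [Zero α] [One α] (m : Fin (n + 1)) (Z : Matrix (Fin n) (Fin n) α) :
    Matrix (Fin (n + 1)) (Fin (n + 1)) α :=
  Fin.insertNth m (Pi.single m 1) fun i => Fin.insertNth m 0 (Z i)

section extendByOne

variable [Zero α] [One α] (m : Fin (n + 1)) (Z : Matrix (Fin n) (Fin n) α)

@[simp]
theorem extendByOne_apply_same_left (j : Fin (n + 1)) :
    extendByOne m Z m j = (1 : Matrix (Fin (n + 1)) (Fin (n + 1)) α) m j := by
  simp [extendByOne, one_apply, Pi.single_apply, eq_comm]

@[simp]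
theorem extendByOne_apply_succAbove_same (i : Fin n) : extendByOne m Z (m.succAbove i) m = 0 := by
  simp [extendByOne]

@[simp]
theorem extendByOne_apply_succAbove (i j : Fin n) :
    extendByOne m Z (m.succAbove i) (m.succAbove j) = Z i j := by
  simp [extendByOne]

@[simp]
theorem submatrix_extendByOne : (extendByOne m Z).submatrix m.succAbove m.succAbove = Z := by
  ext i j
  simp

end extendByOne

def extendByOneHom [Semiring α] (m : Fin (n + 1)) :
    Matrix (Fin n) (Fin n) α →* Matrix (Fin (n + 1)) (Fin (n + 1)) α where
  toFun := extendByOne m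
  map_one' := by
    ext i j
    induction i using Fin.succAboveCases m <;> induction j using Fin.succAboveCases m <;>
      simp [one_apply]
  map_mul' A B := by
    ext i j
    induction i using Fin.succAboveCases m <;> induction j using Fin.succAboveCases m <;>
      simp [mul_apply, Fin.sum_univ_succAbove _ m, one_apply]

end Matrix

namespace PatternPoset

section

variable {n : ℕ} (P : PatternPoset n) {F : Type*} [Field F]

theorem single_mem_patternAlg {i j : Fin n} (hij : P.lt i j) (c : F) :
    Matrix.single i j c ∈ P.patternAlg F := by
  intro k l hkl
  rw [Matrix.single_apply, if_neg]
  rintro ⟨rfl, rfl⟩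
  exact hkl hij

theorem conjLin_mem_patternAlg (g : P.patternGroup F) {x : Matrix (Fin n) (Fin n) F}
    (hx : x ∈ P.patternAlg F) : conjLin F g x ∈ P.patternAlg F := by
  have hg : ((g : (Matrix (Fin n) (Fin n) F)ˣ) : Matrix (Fin n) (Fin n) F) - 1
      ∈ P.patternAlg F := g.2
  have hg' := inv_sub_one_mem hg
  set u := ((g : (Matrix (Fin n) (Fin n) F)ˣ) : Matrix (Fin n) (Fin n) F)
  set v := (((g : (Matrix (Fin n) (Fin n) F)ˣ)⁻¹ : (Matrix (Fin n) (Fin n) F)ˣ) :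
    Matrix (Fin n) (Fin n) F)
  have hexpand : conjLin F g x = x + (u - 1) * x + x * (v - 1) + (u - 1) * x * (v - 1) := by
    change u * x * v = _
    noncomm_ring
  rw [hexpand]
  refine add_mem (add_mem (add_mem hx ?_) ?_) ?_
  · exact mul_mem_patternAlg hg hx
  · exact mul_mem_patternAlg hx hg'
  · exact mul_mem_patternAlg (mul_mem_patternAlg hg hx) hg'

def conjAlg (g : P.patternGroup F) : P.patternAlg F →ₗ[F] P.patternAlg F :=
  LinearMap.restrict (p := P.patternAlg F) (q := P.patternAlg F)
    (conjLin F (g : (Matrix (Fin n) (Fin n) F)ˣ)) fun _ hx => P.conjLin_mem_patternAlg g hx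

@[simp]
theorem coe_conjAlg (g : P.patternGroup F) (x : P.patternAlg F) :
    (P.conjAlg g x : Matrix (Fin n) (Fin n) F) =
      (g : (Matrix (Fin n) (Fin n) F)ˣ) * x * ((g : (Matrix (Fin n) (Fin n) F)ˣ)⁻¹ :
        (Matrix (Fin n) (Fin n) F)ˣ) := rfl

@[simp]
theorem coadj_mk (g : P.patternGroup F) (R : Matrix (Fin n) (Fin n) F) :
    P.coadj F g (Submodule.Quotient.mk R) =
      Submodule.Quotient.mk ((g : (Matrix (Fin n) (Fin n) F)ˣ) * R *
        ((g : (Matrix (Fin n) (Fin n) F)ˣ)⁻¹ : (Matrix (Fin n) (Fin n) F)ˣ)) := rfl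

instance : MulAction (P.patternGroup F) (P.patternAlg F) where
  smul g x := P.conjAlg g x
  one_smul x := Subtype.ext <| show (P.conjAlg 1 x : Matrix (Fin n) (Fin n) F) = x by simp
  mul_smul g h x := Subtype.ext <|
    show (P.conjAlg (g * h) x : Matrix (Fin n) (Fin n) F) = P.conjAlg g (P.conjAlg h x) by
      simp [mul_assoc]

noncomputable instance : MulAction (P.patternGroup F) (P.LSpace F) where
  smul g y := P.coadj F g y
  one_smul y := by
    obtain ⟨R, rfl⟩ := Submodule.Quotient.mk_surjective _ y
    change P.coadj F 1 _ = _
    simp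
  mul_smul g h y := by
    obtain ⟨R, rfl⟩ := Submodule.Quotient.mk_surjective _ y
    change P.coadj F (g * h) _ = P.coadj F g (P.coadj F h _)
    simp [mul_assoc]

theorem smul_patternAlg_def (g : P.patternGroup F) (x : P.patternAlg F) :
    g • x = P.conjAlg g x := rfl

theorem smul_LSpace_def (g : P.patternGroup F) (y : P.LSpace F) :
    g • y = P.coadj F g y := rfl

noncomputable def oneAdd (x : P.patternAlg F) : P.patternGroup F :=
  ⟨(IsNilpotent.isUnit_one_add ⟨n, pow_card_eq_zero x.2⟩).unit,
    show (1 + (x : Matrix (Fin n) (Fin n) F)) - 1 ∈ P.patternAlg F by simp⟩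

noncomputable def subOneEquiv : P.patternGroup F ≃ P.patternAlg F where
  toFun g := ⟨(g : (Matrix (Fin n) (Fin n) F)ˣ) - 1, g.2⟩
  invFun := P.oneAdd
  left_inv g := Subtype.ext <| Units.ext <| by simp [oneAdd]
  right_inv x := Subtype.ext <| by simp [oneAdd]

theorem subOneEquiv_conj (c a : P.patternGroup F) :
    P.subOneEquiv (c * a * c⁻¹) = c • P.subOneEquiv a := by
  apply Subtype.ext
  simp [subOneEquiv, smul_patternAlg_def, mul_sub, sub_mul]

/-- The trace pairing `⟨[R], x⟩ = tr(x R)` between `L_P(q)` and `𝒰_P(q)`. -/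
def tracePairing (F : Type*) [Field F] :
    P.LSpace F →ₗ[F] P.patternAlg F →ₗ[F] F :=
  (P.lowQuot F).liftQ
    (((LinearMap.mul F (Matrix (Fin n) (Fin n) F)).flip.compr₂
      (Matrix.traceLinearMap (Fin n) F F)).compl₂ (P.patternAlg F).subtype) <| by
    intro R hR
    rw [LinearMap.mem_ker]
    ext x
    simp only [LinearMap.compl₂_apply, LinearMap.compr₂_apply, LinearMap.flip_apply,
      LinearMap.mul_apply', Matrix.traceLinearMap_apply, Submodule.subtype_apply,
      LinearMap.zero_apply, Matrix.trace, Matrix.diag, Matrix.mul_apply]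
    refine Finset.sum_eq_zero fun i _ => Finset.sum_eq_zero fun j _ => ?_
    by_cases h : P.lt i j
    · rw [hR j i h, mul_zero]
    · rw [x.2 i j h, zero_mul]

@[simp]
theorem tracePairing_mk (R : Matrix (Fin n) (Fin n) F) (x : P.patternAlg F) :
    P.tracePairing F (Submodule.Quotient.mk R) x =
      Matrix.trace ((x : Matrix (Fin n) (Fin n) F) * R) := rfl

instance : (P.tracePairing F).IsPerfPair := by
  refine .of_injective' ((injective_iff_map_eq_zero _).2 fun y hy => ?_)
    ((injective_iff_map_eq_zero _).2 fun x hx => ?_)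
  · obtain ⟨R, rfl⟩ := Submodule.Quotient.mk_surjective _ y
    refine (Submodule.Quotient.mk_eq_zero _).2 fun i j hji => ?_
    simpa [tracePairing_mk, Matrix.trace_single_mul] using
      LinearMap.congr_fun hy ⟨_, P.single_mem_patternAlg hji (1 : F)⟩
  · refine Subtype.ext <| Matrix.ext fun i j => ?_
    simpa [tracePairing_mk, Matrix.trace_mul_single] using
      LinearMap.congr_fun hx (Submodule.Quotient.mk (Matrix.single j i (1 : F)))

theorem tracePairing_coadj (g : P.patternGroup F) (y : P.LSpace F) (x : P.patternAlg F) :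
    P.tracePairing F (P.coadj F g y) x = P.tracePairing F y (P.conjAlg g⁻¹ x) := by
  obtain ⟨R, rfl⟩ := Submodule.Quotient.mk_surjective _ y
  simp only [coadj_mk, tracePairing_mk, coe_conjAlg, Subgroup.coe_inv, inv_inv]
  rw [← Matrix.mul_assoc, ← Matrix.mul_assoc, Matrix.trace_mul_comm]
  simp only [Matrix.mul_assoc]

instance [Finite F] : Finite (P.LSpace F) := Module.finite_of_finite F

theorem card_fixedBy_LSpace [Finite F] (g : P.patternGroup F) :
    Nat.card (MulAction.fixedBy (P.LSpace F) g) =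
      Nat.card (MulAction.fixedBy (P.patternAlg F) g) := by
  rw [← MulAction.fixedBy_inv (α := P.patternAlg F) g]
  exact LinearMap.card_fixedPoints_eq_of_isPerfPair (P.tracePairing F) (P.tracePairing_coadj g)

theorem kOf_eq_card_orbits [Finite F] :
    P.kOf F = Nat.card (MulAction.orbitRel.Quotient (P.patternGroup F) (P.LSpace F)) :=
  (MulAction.card_conjClasses_eq_card_orbits P.subOneEquiv P.subOneEquiv_conj).trans
    (MulAction.card_orbits_eq_of_card_fixedBy_eq P.card_fixedBy_LSpace).symm

theorem apply_max_eq_one_apply {m : Fin n} (hm : ∀ x, ¬ P.lt m x) (g : P.patternGroup F)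
    (k : Fin n) :
    (g : (Matrix (Fin n) (Fin n) F)ˣ) m k = (1 : Matrix (Fin n) (Fin n) F) m k :=
  sub_eq_zero.mp (g.2 m k (hm k))

end

section

variable {n : ℕ} (P : PatternPoset (n + 1)) {m : Fin (n + 1)} {F : Type*} [Field F]

theorem apply_max_succAbove_eq_zero (hm : ∀ x, ¬ P.lt m x) (g : P.patternGroup F) (j : Fin n) :
    (g : (Matrix (Fin (n + 1)) (Fin (n + 1)) F)ˣ) m (m.succAbove j) = 0 := by
  simp [P.apply_max_eq_one_apply hm, (Fin.succAbove_ne m j).symm]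

def submatrixHom (hm : ∀ x, ¬ P.lt m x) :
    P.patternGroup F →* Matrix (Fin n) (Fin n) F where
  toFun g := ((g : (Matrix (Fin (n + 1)) (Fin (n + 1)) F)ˣ) :
    Matrix (Fin (n + 1)) (Fin (n + 1)) F).submatrix m.succAbove m.succAbove
  map_one' := Matrix.submatrix_one _ Fin.succAbove_right_injective
  map_mul' g h := by
    have hrow : (fun j => ((h : (Matrix (Fin (n + 1)) (Fin (n + 1)) F)ˣ) :
        Matrix (Fin (n + 1)) (Fin (n + 1)) F) m (m.succAbove j)) = 0 :=
      funext (P.apply_max_succAbove_eq_zero hm h)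
    simp [Matrix.submatrix_succAbove_mul, hrow]

def deleteHom (hm : ∀ x, ¬ P.lt m x) : P.patternGroup F →* (P.delete m).patternGroup F :=
  (P.submatrixHom hm).toHomUnits.codRestrict _ fun g i j hij => by
    have hone : (1 : Matrix (Fin n) (Fin n) F) i j =
        (1 : Matrix (Fin (n + 1)) (Fin (n + 1)) F) (m.succAbove i) (m.succAbove j) := by
      simp [Matrix.one_apply]
    rw [Matrix.sub_apply, hone]
    exact g.2 _ _ hij

@[simp]
theorem coe_deleteHom (hm : ∀ x, ¬ P.lt m x) (g : P.patternGroup F) :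
    ((P.deleteHom hm g : (Matrix (Fin n) (Fin n) F)ˣ) : Matrix (Fin n) (Fin n) F) =
      ((g : (Matrix (Fin (n + 1)) (Fin (n + 1)) F)ˣ) :
        Matrix (Fin (n + 1)) (Fin (n + 1)) F).submatrix m.succAbove m.succAbove := rfl

@[simp]
theorem coe_inv_deleteHom (hm : ∀ x, ¬ P.lt m x) (g : P.patternGroup F) :
    ((((P.deleteHom hm g : (Matrix (Fin n) (Fin n) F)ˣ))⁻¹ : (Matrix (Fin n) (Fin n) F)ˣ) :
        Matrix (Fin n) (Fin n) F) =
      ((((g : (Matrix (Fin (n + 1)) (Fin (n + 1)) F)ˣ))⁻¹ :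
        (Matrix (Fin (n + 1)) (Fin (n + 1)) F)ˣ) :
          Matrix (Fin (n + 1)) (Fin (n + 1)) F).submatrix m.succAbove m.succAbove := by
  rw [← Subgroup.coe_inv, ← map_inv]
  rfl

theorem deleteHom_surjective (hm : ∀ x, ¬ P.lt m x) :
    Function.Surjective (P.deleteHom (F := F) hm) := by
  intro u
  have hmem : Units.map (Matrix.extendByOneHom m) (u : (Matrix (Fin n) (Fin n) F)ˣ)
      ∈ P.patternGroup F := by
    intro i j hij
    induction i using Fin.succAboveCases m <;> induction j using Fin.succAboveCases m <;>
      simp [Matrix.extendByOneHom, Matrix.one_apply]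
    exact u.2 _ _ hij
  exact ⟨⟨_, hmem⟩, Subtype.ext <| Units.ext <| by simp [Matrix.extendByOneHom]⟩

variable (m) (F) in
def projDelete : P.LSpace F →ₗ[F] (P.delete m).LSpace F :=
  Submodule.mapQ _ _
    { toFun := fun R => R.submatrix m.succAbove m.succAbove
      map_add' := fun _ _ => rfl
      map_smul' := fun _ _ => rfl }
    fun _ hR _ _ hji => hR _ _ hji

@[simp]
theorem projDelete_mk (R : Matrix (Fin (n + 1)) (Fin (n + 1)) F) :
    P.projDelete m F (Submodule.Quotient.mk R) =
      Submodule.Quotient.mk (R.submatrix m.succAbove m.succAbove) := rfl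

end

end PatternPoset

namespace PosetSystem

open PatternPoset

section

variable {n : ℕ} (S : PosetSystem n) {F : Type*} [Field F]

def IsFiberRep (R : Matrix (Fin n) (Fin n) F) : Prop :=
  ∀ b, S.P.lt b S.m → R S.m b = if b ∈ S.A then 1 else 0

theorem isFiberRep_sum_single : S.IsFiberRep (∑ a ∈ S.A, Matrix.single S.m a (1 : F)) := by
  intro b _
  simp [Matrix.sum_apply, Matrix.single_apply]

theorem mk_mem_fiber_iff (R : Matrix (Fin n) (Fin n) F) :
    (Submodule.Quotient.mk R : S.P.LSpace F) ∈ S.fiber F ↔ S.IsFiberRep R := by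
  change Submodule.Quotient.mk R = Submodule.Quotient.mk _ ↔ _
  rw [Submodule.Quotient.eq]
  constructor
  · intro h b hb
    rw [← S.isFiberRep_sum_single b hb, ← sub_eq_zero]
    exact h S.m b ⟨rfl, hb⟩
  · rintro h _ b ⟨rfl, hb⟩
    rw [Matrix.sub_apply, h b hb, S.isFiberRep_sum_single b hb, sub_self]

theorem IsFiberRep.conj (hS : ∀ a ∈ S.A, ∀ x, ¬ (S.P.lt a x ∧ S.P.lt x S.m))
    {R : Matrix (Fin n) (Fin n) F} (hR : S.IsFiberRep R) (g : S.P.patternGroup F) :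
    S.IsFiberRep (((g : (Matrix (Fin n) (Fin n) F)ˣ) : Matrix (Fin n) (Fin n) F) * R *
      (((g : (Matrix (Fin n) (Fin n) F)ˣ)⁻¹ : (Matrix (Fin n) (Fin n) F)ˣ) :
        Matrix (Fin n) (Fin n) F)) := by
  intro b hb
  set v := (((g : (Matrix (Fin n) (Fin n) F)ˣ)⁻¹ : (Matrix (Fin n) (Fin n) F)ˣ) :
    Matrix (Fin n) (Fin n) F)
  have hv : v - 1 ∈ S.P.patternAlg F := inv_sub_one_mem g.2
  have hrow : (((g : (Matrix (Fin n) (Fin n) F)ˣ) : Matrix (Fin n) (Fin n) F) * R * v) S.m b =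
      (R * v) S.m b := by
    simp [Matrix.mul_assoc, Matrix.mul_apply (M := ((g : (Matrix (Fin n) (Fin n) F)ˣ) :
      Matrix (Fin n) (Fin n) F)), S.P.apply_max_eq_one_apply S.m_max, Matrix.one_apply]
  -- only `l ≼ b` contribute to `(R v)_{m b}`, and there `R_{m l}` is prescribed
  have hterm : ∀ l, R S.m l * v l b = if l ∈ S.A then v l b else 0 := by
    intro l
    by_cases hvl : v l b = 0
    · simp [hvl]
    have hl : S.P.lt l S.m := by
      rcases entry_cases hv hvl with rfl | hlb
      · exact hb
      · exact S.P.lt_trans hlb hb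
    rw [hR l hl]
    split_ifs <;> simp
  have hA : ∀ a ∈ S.A, v a b = (1 : Matrix (Fin n) (Fin n) F) a b :=
    fun a ha => sub_eq_zero.mp (hv a b fun hab => hS a ha b ⟨hab, hb⟩)
  rw [hrow, Matrix.mul_apply, Finset.sum_congr rfl fun l _ => hterm l, Finset.sum_ite_mem,
    Finset.univ_inter, Finset.sum_congr rfl hA]
  simp [Matrix.one_apply]

theorem smul_mem_fiber (hS : ∀ a ∈ S.A, ∀ x, ¬ (S.P.lt a x ∧ S.P.lt x S.m))
    (g : S.P.patternGroup F) {x : S.P.LSpace F} (hx : x ∈ S.fiber F) : g • x ∈ S.fiber F := by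
  obtain ⟨R, rfl⟩ := Submodule.Quotient.mk_surjective _ x
  rw [mk_mem_fiber_iff] at hx
  rw [smul_LSpace_def, coadj_mk, mk_mem_fiber_iff]
  exact IsFiberRep.conj S hS hx g

theorem coadjQ_projL (g : S.P.patternGroup F) (x : S.P.LSpace F) :
    S.coadjQ F g (S.P.projL S.m F x) = S.P.projL S.m F (S.P.coadj F g x) := by
  obtain ⟨R, rfl⟩ := Submodule.Quotient.mk_surjective _ x
  rfl

theorem stab_eq_univ (hS : ∀ a ∈ S.A, ∀ x, ¬ (S.P.lt a x ∧ S.P.lt x S.m)) :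
    S.stab F = Set.univ := by
  refine Set.eq_univ_of_forall fun g => ?_
  have h0 := (S.mk_mem_fiber_iff _).2 (S.isFiberRep_sum_single (F := F))
  change S.coadjQ F g (S.oneA F) = S.oneA F
  rw [← h0, coadjQ_projL]
  exact S.smul_mem_fiber hS g h0

end

section

variable {n : ℕ} (S : PosetSystem (n + 1)) {F : Type*} [Field F]

theorem projDelete_injOn_fiber : Set.InjOn (S.P.projDelete S.m F) (S.fiber F) := by
  intro x hx y hy hxy
  obtain ⟨R, rfl⟩ := Submodule.Quotient.mk_surjective _ x
  obtain ⟨T, rfl⟩ := Submodule.Quotient.mk_surjective _ y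
  rw [mk_mem_fiber_iff] at hx hy
  rw [projDelete_mk, projDelete_mk, Submodule.Quotient.eq] at hxy
  rw [Submodule.Quotient.eq]
  intro i j hji
  induction i using Fin.succAboveCases S.m
  · rw [Matrix.sub_apply, hx j hji, hy j hji, sub_self]
  induction j using Fin.succAboveCases S.m
  · exact (S.m_max _ hji).elim
  · exact hxy _ _ hji

theorem projDelete_surjOn_fiber : Set.SurjOn (S.P.projDelete S.m F) (S.fiber F) Set.univ := by
  intro y _
  obtain ⟨Z, rfl⟩ := Submodule.Quotient.mk_surjective _ y
  set X₀ := ∑ a ∈ S.A, Matrix.single S.m a (1 : F)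
  refine ⟨Submodule.Quotient.mk (X₀ + Matrix.extendByOne S.m Z),
    (mk_mem_fiber_iff _ _).2 ?_, ?_⟩
  · intro b hb
    rw [Matrix.add_apply, Matrix.extendByOne_apply_same_left,
      Matrix.one_apply_ne (S.P.ne_of_lt hb).symm, add_zero]
    exact S.isFiberRep_sum_single b hb
  · rw [projDelete_mk]
    congr 1
    ext i j
    simp [X₀, Matrix.sum_apply]

theorem submatrix_conj_sub_mem_lowQuot (hS : ∀ a ∈ S.A, ∀ x, ¬ (S.P.lt a x ∧ S.P.lt x S.m))
    {R : Matrix (Fin (n + 1)) (Fin (n + 1)) F} (hR : S.IsFiberRep R) (g : S.P.patternGroup F) :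
    (((g : (Matrix (Fin (n + 1)) (Fin (n + 1)) F)ˣ) : Matrix (Fin (n + 1)) (Fin (n + 1)) F) * R *
        (((g : (Matrix (Fin (n + 1)) (Fin (n + 1)) F)ˣ)⁻¹ :
          (Matrix (Fin (n + 1)) (Fin (n + 1)) F)ˣ) :
            Matrix (Fin (n + 1)) (Fin (n + 1)) F)).submatrix S.m.succAbove S.m.succAbove -
      (S.P.deleteHom S.m_max g : (Matrix (Fin n) (Fin n) F)ˣ) *
        R.submatrix S.m.succAbove S.m.succAbove *
        (((S.P.deleteHom S.m_max g : (Matrix (Fin n) (Fin n) F)ˣ)⁻¹ :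
          (Matrix (Fin n) (Fin n) F)ˣ) : Matrix (Fin n) (Fin n) F) ∈
        (S.P.delete S.m).lowQuot F := by
  set u := ((g : (Matrix (Fin (n + 1)) (Fin (n + 1)) F)ˣ) : Matrix (Fin (n + 1)) (Fin (n + 1)) F)
  set v := (((g : (Matrix (Fin (n + 1)) (Fin (n + 1)) F)ˣ)⁻¹ :
    (Matrix (Fin (n + 1)) (Fin (n + 1)) F)ˣ) : Matrix (Fin (n + 1)) (Fin (n + 1)) F)
  have hv : v - 1 ∈ S.P.patternAlg F := inv_sub_one_mem g.2
  have hvrow : (fun j => v S.m (S.m.succAbove j)) = 0 :=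
    funext (S.P.apply_max_succAbove_eq_zero S.m_max g⁻¹)
  rw [coe_deleteHom, coe_inv_deleteHom, Matrix.submatrix_succAbove_mul (u * R), hvrow,
    Matrix.vecMulVec_zero, add_zero, Matrix.submatrix_succAbove_mul, Matrix.add_mul,
    add_sub_cancel_left, Matrix.vecMulVec_mul]
  -- what is left is the path through `m`, `u_{i m} R_{m l} v_{l j}`; it would need
  -- `l ≼ j ≺ i ≺ m` with `l ∈ A`
  intro i j hji
  rw [Matrix.vecMulVec_apply]
  by_cases hc : u (S.m.succAbove i) S.m = 0
  · rw [hc, zero_mul]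
  have hi : S.P.lt (S.m.succAbove i) S.m :=
    (entry_cases g.2 hc).resolve_left (Fin.succAbove_ne _ _)
  simp only [Matrix.vecMul, dotProduct, Matrix.submatrix_apply]
  refine mul_eq_zero_of_right _ (Finset.sum_eq_zero fun l _ => ?_)
  by_cases hvl : v (S.m.succAbove l) (S.m.succAbove j) = 0
  · simp [hvl]
  have hl : S.P.lt (S.m.succAbove l) (S.m.succAbove i) := by
    rcases entry_cases hv hvl with h | h
    · rw [h]; exact hji
    · exact S.P.lt_trans h hji
  rw [hR _ (S.P.lt_trans hl hi), if_neg fun ha => hS _ ha _ ⟨hl, hi⟩, zero_mul]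

theorem projDelete_smul (hS : ∀ a ∈ S.A, ∀ x, ¬ (S.P.lt a x ∧ S.P.lt x S.m))
    (g : S.P.patternGroup F) {x : S.P.LSpace F} (hx : x ∈ S.fiber F) :
    S.P.projDelete S.m F (g • x) = S.P.deleteHom S.m_max g • S.P.projDelete S.m F x := by
  obtain ⟨R, rfl⟩ := Submodule.Quotient.mk_surjective _ x
  rw [mk_mem_fiber_iff] at hx
  rw [smul_LSpace_def, smul_LSpace_def, coadj_mk, projDelete_mk, projDelete_mk, coadj_mk,
    Submodule.Quotient.eq]
  exact S.submatrix_conj_sub_mem_lowQuot hS hx g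

theorem systemK_eq_card_orbitSets (hS : ∀ a ∈ S.A, ∀ x, ¬ (S.P.lt a x ∧ S.P.lt x S.m)) :
    S.systemK F = Nat.card {O : Set (S.P.LSpace F) // ∃ X ∈ S.fiber F,
      O = MulAction.orbit (S.P.patternGroup F) X} := by
  simp only [systemK, S.stab_eq_univ hS, Set.mem_univ, true_and]
  rfl

end

end PosetSystem

theorem systemK_eq_kOf_delete_general (n : ℕ) (S : PosetSystem (n + 1))
    (h : ∀ a ∈ S.A, ∀ x, ¬ (S.P.lt a x ∧ S.P.lt x S.m))
    (F : Type) [Field F] [Fintype F] :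
    S.systemK F = (S.P.delete S.m).kOf F := by
  rw [S.systemK_eq_card_orbitSets h, PatternPoset.kOf_eq_card_orbits]
  exact MulAction.card_orbitSets_eq_card_orbits _ (S.P.deleteHom_surjective S.m_max)
    (fun g _ hx => S.smul_mem_fiber h g hx) (fun g _ hx => S.projDelete_smul h g hx)
    ⟨fun _ _ => Set.mem_univ _, S.projDelete_injOn_fiber, S.projDelete_surjOn_fiber⟩

/-- **Lemma 4.4**: if no pair `(a, x) ∈ A × P` satisfies `a ≺ x ≺ m`, then the poset
system `(P, m, A)` reduces to `P − m`: `k(P, m, A; q) = k(P − m; q)`. -/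
theorem systemK_eq_kOf_delete (n : ℕ) (S : PosetSystem (n + 1))
    (h : ∀ a ∈ S.A, ∀ x, ¬ (S.P.lt a x ∧ S.P.lt x S.m))
    (F : Type) [Field F] [Fintype F] (hq : IsPrimePow (Fintype.card F)) :
    S.systemK F = (S.P.delete S.m).kOf F :=
  systemK_eq_kOf_delete_general n S h F
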